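/- Let V be a finite set, let μ be a fully supported probability measure on Ω = {−1,+1}^V, and let c : V × Ω → (0,∞) be flipping rates satisfying the reversibility condition c(x,σ) μ(σ) = c(x,σˣ) μ(σˣ) for all x, σ. Then for every strictly positive function g : Ω → (0,∞), the entropy dissipation inequality E_μ[(𝓛g) · log g] ≤ −D(√g) holds; consequently, for every strictly positive F the function t ↦ Ent_μ(P_t F) is differentiable with d/dt Ent_μ(P_t F) ≤ −D(√(P_t F)) for all t ≥ 0. -/

import Mathlib

open Finset

/-- Flip the spin of `σ` at site `x`. -/
def flipC {V : Type*} [DecidableEq V] (σ : V → Bool) (x : V) : V → Bool :=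
  Function.update σ x (!σ x)

/-- The ±1 spin value of `σ` at site `x`. -/
def spinC {V : Type*} (σ : V → Bool) (x : V) : ℝ := if σ x then 1 else -1

/-- Expectation of `F` under the (discrete, not necessarily normalized) measure `μ`. -/
def Emean {V : Type*} [Fintype V] [DecidableEq V] (μ F : (V → Bool) → ℝ) : ℝ :=
  ∑ σ, μ σ * F σ

/-- The Glauber generator with flipping rates `c`. -/
def gen {V : Type*} [Fintype V] [DecidableEq V] (c : V → (V → Bool) → ℝ)
    (F : (V → Bool) → ℝ) : (V → Bool) → ℝ :=
  fun σ => ∑ x, c x σ * (F (flipC σ x) - F σ)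

/-- The Dirichlet form `D(F) = -E_μ[F ⬝ 𝓛F]`. -/
def dirichlet {V : Type*} [Fintype V] [DecidableEq V] (μ : (V → Bool) → ℝ)
    (c : V → (V → Bool) → ℝ) (F : (V → Bool) → ℝ) : ℝ :=
  - Emean μ (fun σ => F σ * gen c F σ)

/-- Entropy `Ent_μ(F) = E_μ[F log F] − E_μ[F] log E_μ[F]` (note `0 log 0 = 0` in Lean). -/
noncomputable def entropy {V : Type*} [Fintype V] [DecidableEq V] (μ F : (V → Bool) → ℝ) : ℝ :=
  Emean μ (fun σ => F σ * Real.log (F σ)) - Emean μ F * Real.log (Emean μ F)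

/-- Covariance under `μ`. -/
def covar {V : Type*} [Fintype V] [DecidableEq V] (μ F G : (V → Bool) → ℝ) : ℝ :=
  Emean μ (fun σ => F σ * G σ) - Emean μ F * Emean μ G

/-- Variance under `μ`. -/
def varM {V : Type*} [Fintype V] [DecidableEq V] (μ F : (V → Bool) → ℝ) : ℝ :=
  covar μ F F

/-- The Glauber generator as a linear map. -/
def genL {V : Type*} [Fintype V] [DecidableEq V] (c : V → (V → Bool) → ℝ) :
    ((V → Bool) → ℝ) →ₗ[ℝ] ((V → Bool) → ℝ) where
  toFun := gen c
  map_add' F G := by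
    funext σ
    simp only [gen, Pi.add_apply, ← Finset.sum_add_distrib]
    exact Finset.sum_congr rfl fun x _ => by ring
  map_smul' a F := by
    funext σ
    simp only [gen, Pi.smul_apply, smul_eq_mul, RingHom.id_apply, Finset.mul_sum]
    exact Finset.sum_congr rfl fun x _ => by ring

/-- The Glauber generator as a continuous linear map. -/
noncomputable def genCLM {V : Type*} [Fintype V] [DecidableEq V] (c : V → (V → Bool) → ℝ) :
    ((V → Bool) → ℝ) →L[ℝ] ((V → Bool) → ℝ) :=
  LinearMap.toContinuousLinearMap (genL c)

/-- The Glauber semigroup `P_t = exp (t 𝓛)`. -/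
noncomputable def heatSG {V : Type*} [Fintype V] [DecidableEq V] (c : V → (V → Bool) → ℝ)
    (t : ℝ) : ((V → Bool) → ℝ) →L[ℝ] ((V → Bool) → ℝ) :=
  NormedSpace.exp (t • genCLM c)

/-!
Detailed balance makes `𝓛` symmetric in `L²(μ)`: pairing each configuration `σ` with `σˣ` gives
`E_μ[(𝓛g) G] = -½ ∑_{σ,x} μ(σ) c(x,σ) ∇ₓg ∇ₓG`. For `G = log g` the dissipation inequality then
holds edge by edge, by `(√a - √b)² ≤ (a - b)(log a - log b)`. Along the semigroup, `P_t F` stays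
positive, `∂ₜ P_t F = 𝓛 P_t F`, and `E_μ[𝓛 P_t F] = 0`, so the derivative of `Ent_μ(P_t F)` is
`E_μ[(𝓛 P_t F) log P_t F]`.
-/

open Real

lemma sq_sqrt_sub_sqrt_le_sub_mul_log_sub {a b : ℝ} (ha : 0 < a) (hb : 0 < b) :
    (√a - √b) ^ 2 ≤ (a - b) * (log a - log b) := by
  wlog hba : b ≤ a generalizing a b
  · convert this hb ha (le_of_not_ge hba) using 1 <;> ring
  have hlog : a - b ≤ a * (log a - log b) := by
    have h := log_le_sub_one_of_pos (div_pos hb ha)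
    rw [log_div hb.ne' ha.ne', div_sub_one ha.ne', le_div_iff₀ ha] at h
    linarith
  have hsq : a * (√a - √b) ^ 2 ≤ (a - b) ^ 2 := by
    have key : ∀ s r : ℝ, 0 ≤ s → 0 ≤ r → s ^ 2 * (s - r) ^ 2 ≤ (s ^ 2 - r ^ 2) ^ 2 :=
      fun s r hs hr => by
        rw [← sub_nonneg, show (s ^ 2 - r ^ 2) ^ 2 - s ^ 2 * (s - r) ^ 2
          = (s - r) ^ 2 * (2 * s * r + r ^ 2) by ring]
        positivity
    simpa only [sq_sqrt ha.le, sq_sqrt hb.le] using key √a √b (sqrt_nonneg a) (sqrt_nonneg b)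
  refine le_of_mul_le_mul_left ?_ ha
  calc a * (√a - √b) ^ 2 ≤ (a - b) * (a - b) := sq (a - b) ▸ hsq
    _ ≤ (a - b) * (a * (log a - log b)) := mul_le_mul_of_nonneg_left hlog (sub_nonneg.2 hba)
    _ = a * ((a - b) * (log a - log b)) := by ring

section Flip

variable {V : Type*} [DecidableEq V]

@[simp]
lemma flipC_flipC (σ : V → Bool) (x : V) : flipC (flipC σ x) x = σ := by
  simp [flipC]

lemma sum_flipC [Fintype V] (x : V) (f : (V → Bool) → ℝ) :
    ∑ σ, f (flipC σ x) = ∑ σ, f σ :=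
  (Function.Involutive.bijective fun σ => flipC_flipC σ x).sum_comp f

end Flip

section Reversible

variable {V : Type*} [Fintype V] [DecidableEq V] {μ : (V → Bool) → ℝ} {c : V → (V → Bool) → ℝ}

lemma sum_rate_mul_flipC (hrev : ∀ x σ, c x σ * μ σ = c x (flipC σ x) * μ (flipC σ x))
    (h : V → (V → Bool) → ℝ) :
    ∑ σ, ∑ x, μ σ * c x σ * h x (flipC σ x) = ∑ σ, ∑ x, μ σ * c x σ * h x σ := by
  rw [sum_comm]
  conv_rhs => rw [sum_comm]
  refine sum_congr rfl fun x _ => ?_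
  rw [← sum_flipC x fun σ => μ σ * c x σ * h x σ]
  refine sum_congr rfl fun σ _ => ?_
  linear_combination h x (flipC σ x) * hrev x σ

lemma emean_gen_mul (hrev : ∀ x σ, c x σ * μ σ = c x (flipC σ x) * μ (flipC σ x))
    (g G : (V → Bool) → ℝ) :
    Emean μ (fun σ => gen c g σ * G σ) = -(1 / 2) *
      ∑ σ, ∑ x, μ σ * c x σ * ((g (flipC σ x) - g σ) * (G (flipC σ x) - G σ)) := by
  have hflip := sum_rate_mul_flipC hrev fun x σ => (g (flipC σ x) - g σ) * G σ
  simp only [flipC_flipC] at hflip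
  have hsum : Emean μ (fun σ => gen c g σ * G σ) =
      ∑ σ, ∑ x, μ σ * c x σ * ((g (flipC σ x) - g σ) * G σ) := by
    simp only [Emean, gen, sum_mul, mul_sum]
    exact sum_congr rfl fun σ _ => sum_congr rfl fun x _ => by ring
  have hadd : ∑ σ, ∑ x, μ σ * c x σ * ((g (flipC σ x) - g σ) * G σ) +
      ∑ σ, ∑ x, μ σ * c x σ * ((g σ - g (flipC σ x)) * G (flipC σ x)) =
      -∑ σ, ∑ x, μ σ * c x σ * ((g (flipC σ x) - g σ) * (G (flipC σ x) - G σ)) := by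
    simp only [← sum_add_distrib, ← sum_neg_distrib]
    exact sum_congr rfl fun σ _ => sum_congr rfl fun x _ => by ring
  linarith

lemma emean_gen_eq_zero (hrev : ∀ x σ, c x σ * μ σ = c x (flipC σ x) * μ (flipC σ x))
    (g : (V → Bool) → ℝ) : Emean μ (gen c g) = 0 := by
  simpa using emean_gen_mul hrev g fun _ => 1

lemma dirichlet_eq_half_sum (hrev : ∀ x σ, c x σ * μ σ = c x (flipC σ x) * μ (flipC σ x))
    (f : (V → Bool) → ℝ) :
    dirichlet μ c f = (1 / 2) * ∑ σ, ∑ x, μ σ * c x σ * (f (flipC σ x) - f σ) ^ 2 := by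
  simp only [dirichlet, mul_comm (f _), emean_gen_mul hrev, sq]
  ring

theorem emean_gen_mul_log_le (hμ : ∀ σ, 0 ≤ μ σ) (hc : ∀ x σ, 0 ≤ c x σ)
    (hrev : ∀ x σ, c x σ * μ σ = c x (flipC σ x) * μ (flipC σ x))
    {g : (V → Bool) → ℝ} (hg : ∀ σ, 0 < g σ) :
    Emean μ (fun σ => gen c g σ * log (g σ)) ≤ -dirichlet μ c (fun σ => √(g σ)) := by
  rw [emean_gen_mul hrev, dirichlet_eq_half_sum hrev]
  have := sum_le_sum fun σ (_ : σ ∈ univ) => sum_le_sum fun x (_ : x ∈ univ) =>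
    mul_le_mul_of_nonneg_left (sq_sqrt_sub_sqrt_le_sub_mul_log_sub (hg (flipC σ x)) (hg σ))
      (mul_nonneg (hμ σ) (hc x σ))
  linarith

end Reversible

section PositiveOperator

lemma exp_smul_eq_smul_exp_smul_add_smul_one {𝔸 : Type*} [NormedRing 𝔸] [NormedAlgebra ℝ 𝔸]
    [CompleteSpace 𝔸] (A : 𝔸) (t lam : ℝ) :
    NormedSpace.exp (t • A) = Real.exp (-(t * lam)) • NormedSpace.exp (t • (A + lam • 1)) := by
  let _ : NormedAlgebra ℚ 𝔸 := .restrictScalars ℚ ℝ 𝔸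
  have hcomm : Commute ((-(t * lam)) • (1 : 𝔸)) (t • (A + lam • 1)) :=
    (Commute.one_left _).smul_left _
  rw [show t • A = (-(t * lam)) • (1 : 𝔸) + t • (A + lam • 1) by module,
    NormedSpace.exp_add_of_commute hcomm, ← Algebra.algebraMap_eq_smul_one,
    ← NormedSpace.algebraMap_exp_comm, Algebra.algebraMap_eq_smul_one, smul_one_mul,
    Real.exp_eq_exp_ℝ]

variable {E : Type*} [NormedAddCommGroup E] [NormedSpace ℝ E] [PartialOrder E]

lemma pow_apply_nonneg {B : E →L[ℝ] E} (hB : ∀ G, 0 ≤ G → 0 ≤ B G) (n : ℕ) {F : E}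
    (hF : 0 ≤ F) : 0 ≤ (B ^ n) F := by
  induction n with
  | zero => simpa using hF
  | succ n ih => rw [pow_succ', mul_apply_eq_comp]; exact hB _ ih

variable [CompleteSpace E] [IsOrderedAddMonoid E] [OrderClosedTopology E] [PosSMulMono ℝ E]

/-- Every term of the exponential series is nonnegative; keep only the zeroth. -/
lemma le_exp_smul_apply {B : E →L[ℝ] E} (hB : ∀ G, 0 ≤ G → 0 ≤ B G) {t : ℝ} (ht : 0 ≤ t)
    {F : E} (hF : 0 ≤ F) : F ≤ NormedSpace.exp (t • B) F := by
  have hterm (n : ℕ) : 0 ≤ ((n.factorial : ℝ)⁻¹ • (t • B) ^ n) F := by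
    rw [smul_pow, smul_smul, smul_apply]
    exact smul_nonneg (by positivity) (pow_apply_nonneg hB n hF)
  have hsum := (NormedSpace.exp_series_hasSum_exp' (𝕂 := ℝ) (t • B)).mapL
    (ContinuousLinearMap.apply ℝ E F)
  simp only [ContinuousLinearMap.apply_apply] at hsum
  simpa using le_hasSum hsum 0 fun n _ => hterm n

end PositiveOperator

section Semigroup

variable {V : Type*} [Fintype V] [DecidableEq V] {c : V → (V → Bool) → ℝ}

lemma hasDerivAt_heatSG_apply (F : (V → Bool) → ℝ) (t : ℝ) (σ : V → Bool) :
    HasDerivAt (fun s => heatSG c s F σ) (gen c (heatSG c t F) σ) t := by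
  have h := (hasDerivAt_exp_smul_const' (genCLM c) t).clm_apply (hasDerivAt_const t F)
  rw [map_zero, add_zero] at h
  exact hasDerivAt_pi.1 h σ

lemma gen_add_smul_nonneg (hc : ∀ x σ, 0 ≤ c x σ) {lam : ℝ} (hlam : ∀ σ, ∑ x, c x σ ≤ lam)
    {G : (V → Bool) → ℝ} (hG : 0 ≤ G) : 0 ≤ gen c G + lam • G := fun σ => by
  have h : (gen c G + lam • G) σ = ∑ x, c x σ * G (flipC σ x) + (lam - ∑ x, c x σ) * G σ := by
    simp only [Pi.add_apply, Pi.smul_apply, smul_eq_mul, gen, mul_sub, sum_sub_distrib, ← sum_mul]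
    ring
  rw [h]
  exact add_nonneg (sum_nonneg fun x _ => mul_nonneg (hc x σ) (hG _))
    (mul_nonneg (sub_nonneg.2 (hlam σ)) (hG σ))

/-- `P_t = e^{-tλ} exp (t (𝓛 + λ))`, and `𝓛 + λ` is a positive operator once `λ` dominates the
total jump rate out of every configuration. -/
lemma heatSG_apply_pos (hc : ∀ x σ, 0 ≤ c x σ) {t : ℝ} (ht : 0 ≤ t) {F : (V → Bool) → ℝ}
    (hF : ∀ σ, 0 < F σ) (σ : V → Bool) : 0 < heatSG c t F σ := by
  set lam := ∑ τ, ∑ x, c x τ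
  have hlam (τ : V → Bool) : ∑ x, c x τ ≤ lam :=
    single_le_sum (f := fun τ => ∑ x, c x τ) (fun τ _ => sum_nonneg fun x _ => hc x τ)
      (mem_univ τ)
  have hle := le_exp_smul_apply (B := genCLM c + lam • 1)
    (fun G hG => gen_add_smul_nonneg hc hlam hG) ht (F := F) fun τ => (hF τ).le
  rw [heatSG, exp_smul_eq_smul_exp_smul_add_smul_one (genCLM c) t lam]
  exact mul_pos (Real.exp_pos _) ((hF σ).trans_le (hle σ))

end Semigroup

section Entropy

variable {V : Type*} [Fintype V] [DecidableEq V] {μ : (V → Bool) → ℝ}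
  {f : ℝ → (V → Bool) → ℝ} {f' : (V → Bool) → ℝ} {t : ℝ}

lemma hasDerivAt_emean (hf : ∀ σ, HasDerivAt (fun s => f s σ) (f' σ) t) :
    HasDerivAt (fun s => Emean μ (f s)) (Emean μ f') t :=
  HasDerivAt.fun_sum fun σ _ => (hf σ).const_mul (μ σ)

lemma hasDerivAt_entropy (hf : ∀ σ, HasDerivAt (fun s => f s σ) (f' σ) t)
    (hf0 : ∀ σ, f t σ ≠ 0) (hm : Emean μ (f t) ≠ 0) :
    HasDerivAt (fun s => entropy μ (f s))
      (Emean μ (fun σ => (log (f t σ) + 1) * f' σ) - (log (Emean μ (f t)) + 1) * Emean μ f') t := by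
  have hplogp := hasDerivAt_emean (μ := μ) fun σ => (hasDerivAt_mul_log (hf0 σ)).comp t (hf σ)
  have hmlogm := (hasDerivAt_mul_log hm).comp t (hasDerivAt_emean (μ := μ) hf)
  exact hplogp.sub hmlogm

end Entropy

theorem entropy_dissipation_general
    {V : Type*} [Fintype V] [DecidableEq V]
    (μ : (V → Bool) → ℝ) (hμpos : ∀ σ, 0 < μ σ)
    (c : V → (V → Bool) → ℝ) (hcpos : ∀ x σ, 0 < c x σ)
    (hrev : ∀ x σ, c x σ * μ σ = c x (flipC σ x) * μ (flipC σ x)) :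
    (∀ g : (V → Bool) → ℝ, (∀ σ, 0 < g σ) →
        Emean μ (fun σ => gen c g σ * Real.log (g σ))
          ≤ - dirichlet μ c (fun σ => Real.sqrt (g σ))) ∧
      (∀ F : (V → Bool) → ℝ, (∀ σ, 0 < F σ) → ∀ t : ℝ, 0 ≤ t →
        ∃ e : ℝ, HasDerivAt (fun s => entropy μ (heatSG c s F)) e t ∧
          e ≤ - dirichlet μ c (fun σ => Real.sqrt (heatSG c t F σ))) := by
  have hc : ∀ x σ, 0 ≤ c x σ := fun x σ => (hcpos x σ).le
  have hdiss (g : (V → Bool) → ℝ) (hg : ∀ σ, 0 < g σ) :=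
    emean_gen_mul_log_le (fun σ => (hμpos σ).le) hc hrev hg
  refine ⟨hdiss, fun F hF t ht => ?_⟩
  set g := heatSG c t F
  have hg : ∀ σ, 0 < g σ := heatSG_apply_pos hc ht hF
  have hm : 0 < Emean μ g := sum_pos (fun σ _ => mul_pos (hμpos σ) (hg σ)) univ_nonempty
  refine ⟨_, hasDerivAt_entropy (hasDerivAt_heatSG_apply F t) (fun σ => (hg σ).ne') hm.ne', ?_⟩
  have hmass := emean_gen_eq_zero hrev g
  rw [hmass, mul_zero, sub_zero]
  calc Emean μ (fun σ => (log (g σ) + 1) * gen c g σ)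
      = Emean μ (fun σ => gen c g σ * log (g σ)) + Emean μ (gen c g) := by
        simp only [Emean, ← sum_add_distrib]
        exact sum_congr rfl fun σ _ => by ring
    _ ≤ _ := by rw [hmass, add_zero]; exact hdiss g hg

/-- **Entropy dissipation (de Bruijn) inequality** for reversible Glauber dynamics:
`E_μ[(𝓛g) log g] ≤ −D(√g)` for strictly positive `g`; consequently `t ↦ Ent_μ(P_t F)`
is differentiable with derivative `≤ −D(√(P_t F))` for `t ≥ 0` and strictly positive `F`. -/
theorem entropy_dissipation
    {V : Type*} [Fintype V] [DecidableEq V]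
    (μ : (V → Bool) → ℝ) (hμpos : ∀ σ, 0 < μ σ) (hμ1 : ∑ σ, μ σ = 1)
    (c : V → (V → Bool) → ℝ) (hcpos : ∀ x σ, 0 < c x σ)
    (hrev : ∀ x σ, c x σ * μ σ = c x (flipC σ x) * μ (flipC σ x)) :
    (∀ g : (V → Bool) → ℝ, (∀ σ, 0 < g σ) →
        Emean μ (fun σ => gen c g σ * Real.log (g σ))
          ≤ - dirichlet μ c (fun σ => Real.sqrt (g σ))) ∧
      (∀ F : (V → Bool) → ℝ, (∀ σ, 0 < F σ) → ∀ t : ℝ, 0 ≤ t →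
        ∃ e : ℝ, HasDerivAt (fun s => entropy μ (heatSG c s F)) e t ∧
          e ≤ - dirichlet μ c (fun σ => Real.sqrt (heatSG c t F σ))) :=
  entropy_dissipation_general μ hμpos c hcpos hrev
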